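/- arXiv:2511.16974 — 3 statements merged into one kernel-verified Lean document; each statement's English description precedes it below -/
import Mathlib

section
/- Let A be an invertible n×n real matrix, B an n×m matrix of full column rank m, K_s an m×n matrix such that A - B·K_s is invertible, and N_s an m×m matrix. Define K_n = K_s·(A - B·K_s)^{-1} and N_n = (I + K_n·B)·N_s. Then for any state x and reference r, if ẋ = A·x + B·u with u = -K_s·x + N_s·r, the state-derivative feedback control -K_n·ẋ + N_n·r equals u; i.e., -K_n·(A·x + B·(-K_s·x + N_s·r)) + N_n·r = -K_s·x + N_s·r. -/
open Matrix

theorem sdf_equals_sf {n m : ℕ}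
    (A : Matrix (Fin n) (Fin n) ℝ) (B : Matrix (Fin n) (Fin m) ℝ)
    (Ks : Matrix (Fin m) (Fin n) ℝ) (Ns : Matrix (Fin m) (Fin m) ℝ)
    (hA : IsUnit A) (hB : B.rank = m) (hAK : IsUnit (A - B * Ks))
    (Kn : Matrix (Fin m) (Fin n) ℝ) (hKn : Kn = Ks * (A - B * Ks)⁻¹)
    (Nn : Matrix (Fin m) (Fin m) ℝ) (hNn : Nn = (1 + Kn * B) * Ns)
    (x : Fin n → ℝ) (r : Fin m → ℝ) :
    -(Kn *ᵥ (A *ᵥ x + B *ᵥ (-(Ks *ᵥ x) + Ns *ᵥ r))) + Nn *ᵥ r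
      = -(Ks *ᵥ x) + Ns *ᵥ r := by
  have hK : Kn * (A - B * Ks) = Ks := by
    rw [hKn, Matrix.mul_assoc,
      Matrix.nonsing_inv_mul _ ((Matrix.isUnit_iff_isUnit_det _).mp hAK), Matrix.mul_one]
  have h1 : A *ᵥ x + B *ᵥ (-(Ks *ᵥ x) + Ns *ᵥ r)
      = (A - B * Ks) *ᵥ x + (B * Ns) *ᵥ r := by
    simp [sub_mulVec, mulVec_add, mulVec_neg, mulVec_mulVec]
    abel
  rw [h1, mulVec_add, mulVec_mulVec, hK, hNn, add_mul, one_mul, add_mulVec,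
    mulVec_mulVec, Matrix.mul_assoc]
  abel
end

section
/- Let A be an invertible n×n real matrix, B an n×m matrix, K_s an m×n matrix with A - B·K_s invertible, and K_n = K_s·(A - B·K_s)^{-1}. Then the closed-loop matrix under state-derivative feedback, (I + B·K_n)^{-1}·A, exists (i.e., I + B·K_n is invertible) and equals A - B·K_s. -/
open Matrix

theorem sdf_closed_loop_matrix {n m : ℕ}
    (A : Matrix (Fin n) (Fin n) ℝ) (B : Matrix (Fin n) (Fin m) ℝ)
    (Ks : Matrix (Fin m) (Fin n) ℝ)
    (hA : IsUnit A) (hAK : IsUnit (A - B * Ks))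
    (Kn : Matrix (Fin m) (Fin n) ℝ) (hKn : Kn = Ks * (A - B * Ks)⁻¹) :
    IsUnit (1 + B * Kn) ∧ (1 + B * Kn)⁻¹ * A = A - B * Ks := by
  have hAKd : IsUnit (A - B * Ks).det := (isUnit_iff_isUnit_det _).mp hAK
  have h1 : (1 + B * Kn) * (A - B * Ks) = A := by
    subst hKn
    rw [add_mul, one_mul, Matrix.mul_assoc B, Matrix.mul_assoc Ks, Matrix.nonsing_inv_mul _ hAKd,
      Matrix.mul_one, sub_add_cancel]
  have hU : IsUnit (1 + B * Kn) := by
    rw [isUnit_iff_isUnit_det]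
    have : (1 + B * Kn).det * (A - B * Ks).det = A.det := by
      rw [← det_mul, h1]
    exact isUnit_of_mul_isUnit_left (this ▸ (isUnit_iff_isUnit_det _).mp hA)
  refine ⟨hU, ?_⟩
  have hUd : IsUnit (1 + B * Kn).det := (isUnit_iff_isUnit_det _).mp hU
  calc (1 + B * Kn)⁻¹ * A = (1 + B * Kn)⁻¹ * ((1 + B * Kn) * (A - B * Ks)) := by rw [h1]
    _ = A - B * Ks := by rw [← mul_assoc, Matrix.nonsing_inv_mul _ hUd, one_mul]
end

section
/- Let A be invertible, K_s such that A - B·K_s is invertible, and K_n = K_s·(A - B·K_s)^{-1}. If A - B·K_s is Hurwitz stable (all eigenvalues have negative real part), then the state-derivative closed-loop system ẋ = (I + B·K_n)^{-1}·A·x is asymptotically stable. -/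
open Matrix NormedSpace Filter

attribute [local instance] Matrix.linftyOpNormedRing Matrix.linftyOpNormedAlgebra


-- truncation of exp applied to a generalized eigenvector
lemma sdf_exp_mulVec_trunc {n : ℕ} (N : Matrix (Fin n) (Fin n) ℂ) (v : Fin n → ℂ) (k : ℕ)
    (hk : N ^ k *ᵥ v = 0) (t : ℂ) :
    exp (t • N) *ᵥ v = ∑ j ∈ Finset.range k, ((t ^ j * (Nat.factorial j : ℂ)⁻¹) • (N ^ j *ᵥ v)) := by
  classical
  let Lm : Matrix (Fin n) (Fin n) ℂ →ₗ[ℂ] (Fin n → ℂ) :=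
    { toFun := fun X => X *ᵥ v
      map_add' := fun X Y => Matrix.add_mulVec X Y v
      map_smul' := fun c X => Matrix.smul_mulVec c X v }
  let L := LinearMap.toContinuousLinearMap Lm
  have hL : ∀ X, L X = X *ᵥ v := fun X => rfl
  have hsum : Summable fun j : ℕ => ((Nat.factorial j : ℂ)⁻¹) • (t • N) ^ j :=
    expSeries_summable' (𝕂 := ℂ) (t • N)
  have h1 : exp (t • N) *ᵥ v = ∑' j : ℕ, L (((Nat.factorial j : ℂ)⁻¹) • (t • N) ^ j) := by
    rw [← hL, exp_eq_tsum ℂ, L.map_tsum hsum]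
  rw [h1]
  have h2 : ∀ j : ℕ, L (((Nat.factorial j : ℂ)⁻¹) • (t • N) ^ j)
      = (t ^ j * (Nat.factorial j : ℂ)⁻¹) • (N ^ j *ᵥ v) := by
    intro j
    rw [hL, smul_pow, ← smul_assoc, smul_eq_mul, mul_comm, Matrix.smul_mulVec]
  simp_rw [h2]
  refine tsum_eq_sum ?_
  intro j hj
  have hjk : k ≤ j := by simpa using hj
  have : N ^ j *ᵥ v = 0 := by
    have : N ^ j = N ^ (j - k) * N ^ k := by rw [← pow_add]; congr 1; omega
    rw [this, ← Matrix.mulVec_mulVec, hk, Matrix.mulVec_zero]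
  rw [this, smul_zero]

lemma sdf_scalar_decay (μ : ℂ) (hμ : μ.re < 0) (j : ℕ) :
    Tendsto (fun t : ℝ => Complex.exp (t * μ) * (t : ℂ) ^ j) atTop (nhds 0) := by
  rw [tendsto_zero_iff_norm_tendsto_zero]
  set c : ℝ := -μ.re with hc
  have hcpos : 0 < c := by simpa [hc] using hμ
  have h1 : Tendsto (fun t : ℝ => c⁻¹ ^ j * ((c * t) ^ j * Real.exp (-(c * t)))) atTop (nhds 0) := by
    have := (Real.tendsto_pow_mul_exp_neg_atTop_nhds_zero j).comp
      (tendsto_atTop_atTop_of_monotone (fun a b hab => by nlinarith) (fun b => ⟨b / c, by field_simp; exact le_refl b⟩)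
        : Tendsto (fun t : ℝ => c * t) atTop atTop)
    simpa using this.const_mul (c⁻¹ ^ j)
  refine h1.congr' ?_
  filter_upwards [eventually_ge_atTop (0 : ℝ)] with t ht
  have h2 : ‖Complex.exp (↑t * μ) * (t : ℂ) ^ j‖ = Real.exp (t * μ.re) * t ^ j := by
    rw [norm_mul, Complex.norm_exp]
    simp [abs_of_nonneg ht, Complex.ofReal_mul]
  rw [h2]
  have h3 : t * μ.re = -(c * t) := by rw [hc]; ring
  rw [h3]
  field_simp [hcpos.ne']
  ring_nf
  rw [← mul_pow, mul_inv_cancel₀ hcpos.ne', one_pow, one_mul]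

lemma sdf_vec_decay {n : ℕ} (M : Matrix (Fin n) (Fin n) ℂ)
    (h : ∀ μ ∈ spectrum ℂ M, Complex.re μ < 0) (v : Fin n → ℂ) :
    Tendsto (fun t : ℝ => exp ((t : ℂ) • M) *ᵥ v) atTop (nhds 0) := by
  classical
  set f : Module.End ℂ (Fin n → ℂ) := Matrix.toLinAlgEquiv' M with hf
  have hspec : spectrum ℂ f = spectrum ℂ M := AlgEquiv.spectrum_eq (Matrix.toLinAlgEquiv') M
  have hsup : ⨆ μ : ℂ, f.maxGenEigenspace μ = ⊤ := Module.End.iSup_maxGenEigenspace_eq_top f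
  have hv : v ∈ ⨆ μ : ℂ, f.maxGenEigenspace μ := hsup ▸ Submodule.mem_top
  induction hv using Submodule.iSup_induction' with
  | mem μ w hw =>
      by_cases hw0 : w = 0
      · simpa [hw0] using tendsto_const_nhds
      obtain ⟨k, hk⟩ := (Module.End.mem_maxGenEigenspace f μ w).mp hw
      -- μ is in the spectrum
      have hμspec : μ ∈ spectrum ℂ M := by
        rw [← hspec]
        refine Module.End.hasEigenvalue_iff_mem_spectrum.mp ?_
        refine Module.End.hasEigenvalue_of_hasGenEigenvalue (k := k) ?_
        rw [Module.End.HasGenEigenvalue, Module.End.HasUnifEigenvalue, Submodule.ne_bot_iff]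
        exact ⟨w, Module.End.mem_genEigenspace_nat.mpr hk, hw0⟩
      have hμ : μ.re < 0 := h μ hμspec
      set N : Matrix (Fin n) (Fin n) ℂ := M - μ • 1 with hN
      have hNk : N ^ k *ᵥ w = 0 := by
        have he : Matrix.toLinAlgEquiv' (N ^ k) = (f - μ • 1) ^ k := by
          rw [map_pow, hN, map_sub, _root_.map_smul, _root_.map_one, hf]
        have := congrArg (fun (g : Module.End ℂ (Fin n → ℂ)) => g w) he
        rw [← he] at hk
        simp only [Matrix.toLinAlgEquiv'_apply, Matrix.toLin'_apply] at hk
        exact hk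
      have key : ∀ t : ℝ, exp ((t : ℂ) • M) *ᵥ w
          = ∑ j ∈ Finset.range k,
              ((Complex.exp (t * μ) * ((t : ℂ) ^ j * (Nat.factorial j : ℂ)⁻¹)) • (N ^ j *ᵥ w)) := by
        intro t
        have hsplit : (t : ℂ) • M = ((t : ℂ) * μ) • (1 : Matrix (Fin n) (Fin n) ℂ) + (t : ℂ) • N := by
          rw [hN]; rw [smul_sub]; rw [smul_smul]; abel
        have hcomm : Commute (((t : ℂ) * μ) • (1 : Matrix (Fin n) (Fin n) ℂ)) ((t : ℂ) • N) := by
          exact ((Commute.one_left _).smul_left _).smul_right _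
        rw [hsplit, Matrix.exp_add_of_commute _ _ hcomm]
        have h1 : exp (((t : ℂ) * μ) • (1 : Matrix (Fin n) (Fin n) ℂ))
            = Complex.exp (t * μ) • (1 : Matrix (Fin n) (Fin n) ℂ) := by
          rw [← Algebra.algebraMap_eq_smul_one]
          erw [← algebraMap_exp_comm]
          rw [Complex.exp_eq_exp_ℂ, Algebra.algebraMap_eq_smul_one]
        rw [h1, smul_mul_assoc, one_mul, Matrix.smul_mulVec,
          sdf_exp_mulVec_trunc N w k hNk (t : ℂ), Finset.smul_sum]
        refine Finset.sum_congr rfl fun j _ => ?_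
        rw [smul_smul]
      rw [funext key]  -- replaces function
      have h0 : (0 : Fin n → ℂ) = ∑ j ∈ Finset.range k, (0 : Fin n → ℂ) := by simp
      rw [h0]
      refine tendsto_finset_sum _ fun j _ => ?_
      have hs : Tendsto (fun t : ℝ => Complex.exp (t * μ) * ((t : ℂ) ^ j * (Nat.factorial j : ℂ)⁻¹))
          atTop (nhds 0) := by
        have := (sdf_scalar_decay μ hμ j).mul_const ((Nat.factorial j : ℂ)⁻¹)
        simpa [mul_assoc] using this
      simpa using hs.smul_const (N ^ j *ᵥ w)
  | zero => simpa using (tendsto_const_nhds : Tendsto (fun _ : ℝ => (0 : Fin n → ℂ)) atTop _)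
  | add y z _ _ hy hz =>
      have := hy.add hz
      simpa [Matrix.mulVec_add] using this


lemma sdf_sol {n : ℕ} (M : Matrix (Fin n) (Fin n) ℝ) (x : ℝ → Fin n → ℝ)
    (hx : ∀ t, HasDerivAt x (M *ᵥ x t) t) (t : ℝ) :
    x t = exp (t • M) *ᵥ x 0 := by
  classical
  let Lm : Matrix (Fin n) (Fin n) ℝ →ₗ[ℝ] ((Fin n → ℝ) →L[ℝ] (Fin n → ℝ)) :=
    { toFun := fun X => LinearMap.toContinuousLinearMap (X.mulVecLin)
      map_add' := fun X Y => by ext w; simp [Matrix.add_mulVec]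
      map_smul' := fun c X => by ext w; simp [Matrix.smul_mulVec] }
  let B := LinearMap.toContinuousLinearMap Lm
  have hB : ∀ X w, B X w = X *ᵥ w := fun X w => rfl
  set g : ℝ → Fin n → ℝ := fun u => exp ((-u) • M) *ᵥ x u with hgdef
  have hE : ∀ u : ℝ, HasDerivAt (fun u : ℝ => exp ((-u) • M))
      (-(M * exp ((-u) • M))) u := by
    intro u
    have h1 : HasDerivAt (fun s : ℝ => exp (s • M)) (M * exp ((-u) • M)) (-u) :=
      hasDerivAt_exp_smul_const' (𝕂 := ℝ) M (-u)
    have h2 : HasDerivAt (fun u : ℝ => -u) (-1) u := (hasDerivAt_id u).neg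
    have := h1.scomp u h2
    simp only [Function.comp_def, neg_smul, neg_mul, one_smul] at this ⊢
    exact this
  have hg : ∀ u : ℝ, HasDerivAt g 0 u := by
    intro u
    have hc : HasDerivAt (fun u : ℝ => B (exp ((-u) • M)))
        (B (-(M * exp ((-u) • M)))) u :=
      B.hasFDerivAt.comp_hasDerivAt u (hE u)
    have hcomb := hc.clm_apply (hx u)
    have heq : (fun u : ℝ => B (exp ((-u) • M)) (x u)) = g := by
      funext u; rw [hB]
    rw [heq] at hcomb
    have hz : B (-(M * exp ((-u) • M))) (x u) + B (exp ((-u) • M)) (M *ᵥ x u) = 0 := by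
      rw [hB, hB]
      have hcm : exp ((-u) • M) * M = M * exp ((-u) • M) :=
        (((Commute.refl M).smul_left (-u)).exp_left)
      rw [Matrix.neg_mulVec, Matrix.mulVec_mulVec, hcm]
      exact neg_add_cancel _
    rwa [hz] at hcomb
  have hconst : g t = g 0 := by
    refine is_const_of_fderiv_eq_zero (fun u => (hg u).differentiableAt) (fun u => ?_) t 0
    have := (hg u).hasFDerivAt.fderiv
    rw [this]
    ext w
    simp
  have hg0 : g 0 = x 0 := by simp [hgdef]
  have hunit : exp (t • M) * exp ((-t) • M) = 1 := by
    rw [neg_smul, ← Matrix.exp_add_of_commute _ _ (Commute.refl (t • M)).neg_right, add_neg_cancel, exp_zero]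
  have hx' : exp (t • M) *ᵥ g t = x t := by
    rw [hgdef]
    rw [Matrix.mulVec_mulVec, hunit, Matrix.one_mulVec]
  rw [← hx', hconst, hg0]


lemma sdf_closed_loop {n m : ℕ} (A : Matrix (Fin n) (Fin n) ℝ) (B : Matrix (Fin n) (Fin m) ℝ)
    (Ks : Matrix (Fin m) (Fin n) ℝ) (hA : IsUnit A) (hAK : IsUnit (A - B * Ks))
    (Kn : Matrix (Fin m) (Fin n) ℝ) (hKn : Kn = Ks * (A - B * Ks)⁻¹) :
    (1 + B * Kn)⁻¹ * A = A - B * Ks := by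
  set S := A - B * Ks with hS
  have hdS : IsUnit S.det := (Matrix.isUnit_iff_isUnit_det S).mp hAK
  have hdA : IsUnit A.det := (Matrix.isUnit_iff_isUnit_det A).mp hA
  have h1 : 1 + B * Kn = A * S⁻¹ := by
    rw [hKn, ← Matrix.mul_assoc, ← Matrix.mul_nonsing_inv S hdS]
    rw [← Matrix.add_mul]
    congr 1
    rw [hS, sub_add_cancel]
  rw [h1, Matrix.mul_inv_rev, Matrix.nonsing_inv_nonsing_inv S hdS, Matrix.mul_assoc,
    Matrix.nonsing_inv_mul A hdA, Matrix.mul_one]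

-- complexification of exp
lemma sdf_exp_map {n : ℕ} (M : Matrix (Fin n) (Fin n) ℝ) (t : ℝ) :
    (exp (t • M)).map (Complex.ofReal) = exp ((t : ℂ) • M.map Complex.ofReal) := by
  have hcont : Continuous fun X : Matrix (Fin n) (Fin n) ℝ => X.map Complex.ofReal :=
    continuous_id.matrix_map Complex.continuous_ofReal
  have h1 : (Complex.ofRealHom.mapMatrix : Matrix (Fin n) (Fin n) ℝ →+* Matrix (Fin n) (Fin n) ℂ)
      (exp (t • M)) = exp (Complex.ofRealHom.mapMatrix (t • M)) :=
    map_exp _ hcont (t • M)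
  have h2 : (Complex.ofRealHom.mapMatrix : Matrix (Fin n) (Fin n) ℝ →+* Matrix (Fin n) (Fin n) ℂ)
      (t • M) = (t : ℂ) • M.map Complex.ofReal := by
    ext i j
    simp [Matrix.map_apply, RingHom.mapMatrix_apply]
  rw [RingHom.mapMatrix_apply] at h1
  have hco : ⇑Complex.ofRealHom = (Complex.ofReal : ℝ → ℂ) := rfl
  conv_lhs => rw [← hco]
  rw [h1, h2]

theorem sdf_stability {n m : ℕ}
    (A : Matrix (Fin n) (Fin n) ℝ) (B : Matrix (Fin n) (Fin m) ℝ)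
    (Ks : Matrix (Fin m) (Fin n) ℝ)
    (hA : IsUnit A) (hAK : IsUnit (A - B * Ks))
    (Kn : Matrix (Fin m) (Fin n) ℝ) (hKn : Kn = Ks * (A - B * Ks)⁻¹)
    (hHurwitz : ∀ μ : ℂ, μ ∈ spectrum ℂ ((A - B * Ks).map (Complex.ofReal)) → μ.re < 0) :
    ∀ x : ℝ → (Fin n → ℝ),
      (∀ t, HasDerivAt x (((1 + B * Kn)⁻¹ * A) *ᵥ x t) t) →
      Filter.Tendsto x Filter.atTop (nhds 0) := by
  intro x hx
  have hM := sdf_closed_loop A B Ks hA hAK Kn hKn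
  rw [hM] at hx
  set M := A - B * Ks with hMdef
  have hsol := sdf_sol M x hx
  set Mc := M.map Complex.ofReal with hMc
  have hdecay := sdf_vec_decay Mc (fun μ hμ => hHurwitz μ hμ) (fun j => ((x 0 j : ℝ) : ℂ))
  rw [tendsto_pi_nhds]
  intro i
  have hcomp : ∀ t : ℝ, ((x t i : ℝ) : ℂ)
      = (exp ((t : ℂ) • Mc) *ᵥ (fun j => ((x 0 j : ℝ) : ℂ))) i := by
    intro t
    rw [hsol t, ← sdf_exp_map M t]
    simp [Matrix.mulVec, dotProduct, Matrix.map_apply]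
  have h0 : Tendsto (fun t : ℝ => ((x t i : ℝ) : ℂ)) atTop (nhds 0) := by
    rw [funext hcomp]
    have := tendsto_pi_nhds.mp hdecay i
    simpa using this
  have h1 := (Complex.continuous_re.tendsto 0).comp h0
  simpa [Function.comp_def] using h1
end
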